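/- arXiv:math/0612072 — 2 statements merged into one kernel-verified Lean document; each statement's English description precedes it below -/
import Mathlib

section
/- Suppose B is connected, meaning that for every b ∈ B and k ∈ ℕ, if b(b−1)(b−2)⋯(b−k) = 0 in B then b = j·1_B for some natural number j ≤ k, and suppose B is nontrivial. Let f : A → B be a ℚ-linear map such that for some N ∈ ℕ one has ψ_k(f,a) = 0 for all k > N and all a ∈ A. Then there exists a natural number n ≤ N such that f(1) = n·1_B, ψ_k(f,a) = 0 for all k > n and all a ∈ A, and ψ_n(f,1) = 1; i.e., R(f,a) is a polynomial in T of degree at most n for every a and of degree exactly n for a = 1. -/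
open PowerSeries

noncomputable def logOneAdd {A : Type*} [CommRing A] [Algebra ℚ A] (a : A) : PowerSeries A :=
  PowerSeries.mk fun k => ((-1 : ℚ) ^ (k + 1) / k) • a ^ k

noncomputable def mapCoeff {A B : Type*} [CommRing A] [CommRing B] [Algebra ℚ A] [Algebra ℚ B]
    (f : A →ₗ[ℚ] B) (p : PowerSeries A) : PowerSeries B :=
  PowerSeries.mk fun k => f (PowerSeries.coeff k p)

noncomputable def expPS {B : Type*} [CommRing B] [Algebra ℚ B] (p : PowerSeries B) : PowerSeries B :=
  PowerSeries.mk fun k => ∑ m ∈ Finset.range (k + 1),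
    ((m.factorial : ℚ)⁻¹) • PowerSeries.coeff k (p ^ m)

noncomputable def charFun {A B : Type*} [CommRing A] [CommRing B] [Algebra ℚ A] [Algebra ℚ B]
    (f : A →ₗ[ℚ] B) (a : A) : PowerSeries B :=
  expPS (mapCoeff f (logOneAdd a))

noncomputable def psi {A B : Type*} [CommRing A] [CommRing B] [Algebra ℚ A] [Algebra ℚ B]
    (f : A →ₗ[ℚ] B) (a : A) (k : ℕ) : B :=
  PowerSeries.coeff k (charFun f a)

def IsNHom {A B : Type*} [CommRing A] [CommRing B] [Algebra ℚ A] [Algebra ℚ B]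
    (f : A →ₗ[ℚ] B) (n : ℕ) : Prop :=
  f 1 = n • (1 : B) ∧ ∀ k, n + 1 ≤ k → ∀ a : A, psi f a k = 0

noncomputable def frob {A B : Type*} [CommRing A] [CommRing B] [Algebra ℚ A] [Algebra ℚ B]
    (f : A →ₗ[ℚ] B) : (k : ℕ) → (Fin k → A) → B
  | 0, _ => 1
  | k + 1, a =>
      f (a (Fin.last k)) * frob f k (fun i => a i.castSucc)
        - ∑ i : Fin k, frob f k
            (Function.update (fun j : Fin k => a j.castSucc) i (a i.castSucc * a (Fin.last k)))

/-
The characteristic function solves the differential equation `R' = f̂(a / (1 + aT)) · R`. For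
`a = 1` it reads `(1 + T) R' = f(1) R`, so `k! ψ_k(f,1) = f(1) (f(1) - 1) ⋯ (f(1) - k + 1)`;
the vanishing of `ψ_{N+1}(f,1)` and connectedness of `B` force `f(1) = n ≤ N`, and then
`ψ_n(f,1) = 1`.

Once `f(1) = n`, the same differential equation shows
`R(f, a + t)(T) = (1 + tT)^n · R(f, a)(T / (1 + tT))` for rational `t`, hence
`ψ_{N+1}(f, a + t) = ∑_j binom(n - j, N + 1 - j) t^(N+1-j) ψ_j(f, a)`. This vanishes for every
`t ∈ ℚ`, so every coefficient vanishes, and `binom(n - j, i) ≠ 0` for `j > n`.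
-/

open Finset

namespace PowerSeries

section CommRing

variable {R : Type*} [CommRing R]

theorem coeff_pow_eq_zero_of_lt {p : R⟦X⟧} (hp : constantCoeff p = 0) {j m : ℕ} (h : j < m) :
    coeff j (p ^ m) = 0 :=
  X_pow_dvd_iff.mp (pow_dvd_pow_of_dvd (X_dvd_iff.mpr hp) m) j h

theorem coeff_subst_eq_sum {b F : R⟦X⟧} (hb : constantCoeff b = 0) {j M : ℕ} (hM : j < M) :
    coeff j (F.subst b) = ∑ d ∈ range M, coeff d F • coeff j (b ^ d) := by
  rw [coeff_subst' (HasSubst.of_constantCoeff_zero' hb)]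
  refine finsum_eq_sum_of_support_subset _ fun d hd => ?_
  by_contra hdM
  simp only [coe_range, Set.mem_Iio, not_lt] at hdM
  exact hd (by simp only [coeff_pow_eq_zero_of_lt hb (show j < d by omega), smul_zero])

theorem constantCoeff_subst_of_constantCoeff_eq_zero {b : R⟦X⟧} (hb : constantCoeff b = 0)
    (F : R⟦X⟧) : constantCoeff (F.subst b) = constantCoeff F := by
  rw [← coeff_zero_eq_constantCoeff_apply, coeff_subst_eq_sum hb zero_lt_one]
  simp

theorem eq_of_derivative_eq_mul [IsAddTorsionFree R] {p q h : R⟦X⟧} (hp : d⁄dX R p = h * p)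
    (hq : d⁄dX R q = h * q) (h0 : constantCoeff p = constantCoeff q) : p = q := by
  ext k
  induction k using Nat.strong_induction_on with
  | _ k ih =>
    match k with
    | 0 => simpa using h0
    | k + 1 =>
      have hd : coeff k (d⁄dX R p) = coeff k (d⁄dX R q) := by
        rw [hp, hq, coeff_mul, coeff_mul]
        exact sum_congr rfl fun x hx => by
          rw [ih x.2 (Nat.lt_succ_of_le (Finset.HasAntidiagonal.antidiagonal.snd_le hx))]
      rw [coeff_derivative, coeff_derivative, ← Nat.cast_add_one, mul_comm, ← nsmul_eq_mul,
        mul_comm, ← nsmul_eq_mul] at hd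
      exact IsAddTorsionFree.nsmul_right_injective k.succ_ne_zero hd

variable {S : Type*} [CommRing S] (g : R →+* S)

theorem derivative_map (p : R⟦X⟧) : d⁄dX S (map g p) = map g (d⁄dX R p) := by
  ext k
  simp [coeff_derivative]

theorem constantCoeff_map_eq_zero {p : R⟦X⟧} (hp : constantCoeff p = 0) :
    constantCoeff (map g p) = 0 := by
  simp [← coeff_zero_eq_constantCoeff_apply, hp]

end CommRing

section OneAddCMulX

variable (t : ℚ)

theorem one_add_C_mul_X_mul_inv : (1 + C t * X) * (1 + C t * X)⁻¹ = 1 :=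
  PowerSeries.mul_inv_cancel _ (by simp)

theorem derivative_one_add_C_mul_X_pow (n : ℕ) :
    d⁄dX ℚ ((1 + C t * X) ^ n) = (n : ℚ⟦X⟧) * C t * (1 + C t * X)⁻¹ * (1 + C t * X) ^ n := by
  rcases n with _ | n
  · simp
  · have hd : d⁄dX ℚ (1 + C t * X) = C t := by simp
    rw [derivative_pow, Nat.add_sub_cancel, hd]
    linear_combination
      (-((n + 1 : ℕ) : ℚ⟦X⟧) * C t * (1 + C t * X) ^ n) * one_add_C_mul_X_mul_inv t

theorem derivative_X_mul_inv_one_add_C_mul_X :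
    d⁄dX ℚ (X * (1 + C t * X)⁻¹) = (1 + C t * X)⁻¹ ^ 2 := by
  have hd : d⁄dX ℚ (1 + C t * X) = C t := by simp
  rw [Derivation.leibniz, derivative_inv', smul_eq_mul, smul_eq_mul, derivative_X, hd]
  linear_combination (-(1 + C t * X)⁻¹) * one_add_C_mul_X_mul_inv t

theorem one_add_C_mul_X_pow_mul_inv_pow (n j : ℕ) :
    (1 + C t * X) ^ n * (1 + C t * X)⁻¹ ^ j = rescale t (binomialSeries ℚ ((n : ℤ) - j)) := by
  have hu := one_add_C_mul_X_mul_inv t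
  have hpow (k : ℕ) : (1 + C t * X) ^ k = rescale t (binomialSeries ℚ (k : ℤ)) := by
    rw [binomialSeries_nat, map_pow, map_add, map_one, rescale_X]
  refine mul_right_cancel₀ (pow_ne_zero j (left_ne_zero_of_mul_eq_one hu)) ?_
  rw [mul_assoc, ← mul_pow, mul_comm _ (1 + C t * X), hu, one_pow, mul_one, hpow, hpow,
    ← map_mul, ← binomialSeries_add, sub_add_cancel]

theorem coeff_one_add_C_mul_X_pow_mul_pow {n j m : ℕ} (hjm : j ≤ m) :
    coeff m ((1 + C t * X) ^ n * (X * (1 + C t * X)⁻¹) ^ j)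
      = t ^ (m - j) * Ring.choose ((n : ℤ) - j) (m - j) := by
  rw [mul_pow, mul_left_comm, one_add_C_mul_X_pow_mul_inv_pow, coeff_X_pow_mul', if_pos hjm,
    coeff_rescale, binomialSeries_coeff, zsmul_one]

end OneAddCMulX

section RatAlgebra

variable {A : Type*} [CommRing A] [Algebra ℚ A]

theorem coeff_subst_map_eq_sum {s : ℚ⟦X⟧} (hs : constantCoeff s = 0) (F : A⟦X⟧) {j M : ℕ}
    (hM : j < M) :
    coeff j (F.subst (map (algebraMap ℚ A) s)) = ∑ d ∈ range M, coeff j (s ^ d) • coeff d F := by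
  rw [coeff_subst_eq_sum (constantCoeff_map_eq_zero _ hs) hM]
  refine sum_congr rfl fun d _ => ?_
  rw [← map_pow, coeff_map, smul_eq_mul, Algebra.smul_def, mul_comm]

theorem coeff_map_mul_subst_map {q s : ℚ⟦X⟧} (hs : constantCoeff s = 0) (F : A⟦X⟧) (m : ℕ) :
    coeff m (map (algebraMap ℚ A) q * F.subst (map (algebraMap ℚ A) s))
      = ∑ j ∈ range (m + 1), coeff m (q * s ^ j) • coeff j F := by
  rw [coeff_mul]
  calc _ = ∑ x ∈ antidiagonal m, ∑ j ∈ range (m + 1),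
        (coeff x.1 q * coeff x.2 (s ^ j)) • coeff j F := by
        refine sum_congr rfl fun x hx => ?_
        rw [coeff_subst_map_eq_sum hs F
          (Nat.lt_succ_of_le (Finset.HasAntidiagonal.antidiagonal.snd_le hx)), coeff_map, mul_sum]
        exact sum_congr rfl fun j _ => by rw [← Algebra.smul_def, smul_smul]
    _ = _ := by
        rw [sum_comm]
        exact sum_congr rfl fun j _ => by rw [← sum_smul, ← coeff_mul]

end RatAlgebra

end PowerSeries

theorem Module.eq_zero_of_forall_sum_pow_smul_eq_zero {K V ι : Type*} [Field K] [Infinite K]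
    [AddCommGroup V] [Module K V] {s : Finset ι} {e : ι → ℕ} (he : Set.InjOn e s) {v : ι → V}
    (h : ∀ t : K, ∑ i ∈ s, t ^ e i • v i = 0) {i : ι} (hi : i ∈ s) : v i = 0 := by
  refine (Module.forall_dual_apply_eq_zero_iff K (v i)).mp fun φ => ?_
  let p : Polynomial K := ∑ j ∈ s, Polynomial.C (φ (v j)) * Polynomial.X ^ e j
  have hp : p = 0 := Polynomial.funext fun t => by
    have hφ := congrArg φ (h t)
    simp only [map_sum, map_smul, smul_eq_mul, map_zero] at hφ
    simp only [p, Polynomial.eval_finsetSum, Polynomial.eval_mul, Polynomial.eval_C,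
      Polynomial.eval_pow, Polynomial.eval_X, Polynomial.eval_zero, ← hφ, mul_comm]
  have hcoeff := congrArg (Polynomial.coeff · (e i)) hp
  simp only [p, Polynomial.finsetSum_coeff, Polynomial.coeff_C_mul_X_pow,
    Polynomial.coeff_zero] at hcoeff
  rwa [sum_eq_single i (fun j hj hji => if_neg fun hij => hji (he hj hi hij.symm))
    (fun h => absurd hi h), if_pos rfl] at hcoeff

theorem Ring.choose_natCast_sub_ne_zero {n k : ℕ} (h : n < k) (i : ℕ) :
    Ring.choose ((n : ℤ) - k) i ≠ 0 := by
  obtain ⟨r, rfl⟩ : ∃ r, k = n + r + 1 := ⟨k - n - 1, by omega⟩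
  rw [show (n : ℤ) - (n + r + 1 : ℕ) = -((r + 1 : ℕ) : ℤ) by push_cast; ring, Ring.choose_neg,
    Units.smul_def, smul_eq_mul,
    show ((r + 1 : ℕ) : ℤ) + i - 1 = ((r + i : ℕ) : ℤ) by push_cast; ring, Ring.choose_natCast]
  exact mul_ne_zero (Units.ne_zero _) (Nat.cast_ne_zero.mpr (Nat.choose_pos (by omega)).ne')

section MapCoeff

variable {A B : Type*} [CommRing A] [CommRing B] [Algebra ℚ A] [Algebra ℚ B] (f : A →ₗ[ℚ] B)

@[simp]
theorem coeff_mapCoeff (p : A⟦X⟧) (k : ℕ) : coeff k (mapCoeff f p) = f (coeff k p) :=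
  coeff_mk _ _

theorem mapCoeff_add (p q : A⟦X⟧) : mapCoeff f (p + q) = mapCoeff f p + mapCoeff f q := by
  ext k
  simp

theorem mapCoeff_one : mapCoeff f 1 = C (f 1) := by
  ext k
  rw [coeff_mapCoeff, coeff_one, coeff_C]
  split_ifs <;> simp

theorem mapCoeff_map_mul (q : ℚ⟦X⟧) (F : A⟦X⟧) :
    mapCoeff f (map (algebraMap ℚ A) q * F) = map (algebraMap ℚ B) q * mapCoeff f F := by
  ext k
  simp only [coeff_mapCoeff, coeff_mul, coeff_map, map_sum, ← Algebra.smul_def, map_smul]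

theorem mapCoeff_map (q : ℚ⟦X⟧) :
    mapCoeff f (map (algebraMap ℚ A) q) = map (algebraMap ℚ B) q * C (f 1) := by
  rw [← mul_one (map _ q), mapCoeff_map_mul, mapCoeff_one]

theorem mapCoeff_subst_map {s : ℚ⟦X⟧} (hs : constantCoeff s = 0) (F : A⟦X⟧) :
    mapCoeff f (F.subst (map (algebraMap ℚ A) s))
      = (mapCoeff f F).subst (map (algebraMap ℚ B) s) := by
  ext j
  simp only [coeff_mapCoeff, coeff_subst_map_eq_sum hs _ (lt_add_one j), map_sum, map_smul]

theorem derivative_mapCoeff (p : A⟦X⟧) : d⁄dX B (mapCoeff f p) = mapCoeff f (d⁄dX A p) := by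
  ext k
  simp only [coeff_derivative, coeff_mapCoeff, ← Nat.cast_add_one, ← nsmul_eq_mul', map_nsmul]

end MapCoeff

section ExpLog

variable {A : Type*} [CommRing A] [Algebra ℚ A]

theorem expPS_eq_subst_exp {p : A⟦X⟧} (hp : constantCoeff p = 0) :
    expPS p = (exp A).subst p := by
  ext k
  rw [expPS, coeff_mk, coeff_subst_eq_sum hp (lt_add_one k)]
  refine sum_congr rfl fun m _ => ?_
  rw [coeff_exp, smul_eq_mul, Algebra.smul_def, one_div]

theorem constantCoeff_expPS {p : A⟦X⟧} (hp : constantCoeff p = 0) :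
    constantCoeff (expPS p) = 1 := by
  rw [expPS_eq_subst_exp hp, constantCoeff_subst_of_constantCoeff_eq_zero hp, constantCoeff_exp]

theorem derivative_expPS {p : A⟦X⟧} (hp : constantCoeff p = 0) :
    d⁄dX A (expPS p) = d⁄dX A p * expPS p := by
  rw [expPS_eq_subst_exp hp, derivative_subst (HasSubst.of_constantCoeff_zero' hp),
    derivative_exp, mul_comm]

theorem constantCoeff_logOneAdd (a : A) : constantCoeff (logOneAdd a) = 0 := by
  simp [logOneAdd, ← coeff_zero_eq_constantCoeff_apply]

theorem coeff_derivative_logOneAdd (a : A) (k : ℕ) :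
    coeff k (d⁄dX A (logOneAdd a)) = (-a) ^ k * a := by
  have hk : ((-1 : ℚ) ^ (k + 1 + 1) / ((k + 1 : ℕ) : ℚ)) * ((k : ℚ) + 1) = (-1) ^ k := by
    push_cast
    field_simp
    ring
  rw [coeff_derivative, logOneAdd, coeff_mk,
    show ((k : A) + 1) = algebraMap ℚ A ((k : ℚ) + 1) by simp, mul_comm, ← Algebra.smul_def,
    smul_smul, mul_comm ((k : ℚ) + 1), hk, Algebra.smul_def, map_pow, map_neg, map_one]
  ring

theorem one_add_C_mul_X_mul_derivative_logOneAdd (a : A) :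
    (1 + C a * X) * d⁄dX A (logOneAdd a) = C a := by
  ext k
  rcases k with _ | k
  · simpa using coeff_derivative_logOneAdd a 0
  · rw [add_mul, one_mul, map_add, mul_assoc, coeff_C_mul, coeff_succ_X_mul,
      coeff_derivative_logOneAdd, coeff_derivative_logOneAdd, coeff_C, if_neg k.succ_ne_zero]
    ring

theorem derivative_logOneAdd_add_algebraMap (a : A) (t : ℚ) :
    d⁄dX A (logOneAdd (a + algebraMap ℚ A t)) =
      map (algebraMap ℚ A) (C t * (1 + C t * X)⁻¹)
        + map (algebraMap ℚ A) ((1 + C t * X)⁻¹ ^ 2)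
          * (d⁄dX A (logOneAdd a)).subst (map (algebraMap ℚ A) (X * (1 + C t * X)⁻¹)) := by
  have hσ := HasSubst.of_constantCoeff_zero'
    (constantCoeff_map_eq_zero (algebraMap ℚ A) (by simp : constantCoeff (X * (1 + C t * X)⁻¹) = 0))
  set v := map (algebraMap ℚ A) (1 + C t * X)⁻¹
  set w : A⟦X⟧ := (d⁄dX A (logOneAdd a)).subst (map (algebraMap ℚ A) (X * (1 + C t * X)⁻¹))
  have hv : (1 + C (algebraMap ℚ A t) * X) * v = 1 := by
    have := congrArg (map (algebraMap ℚ A)) (one_add_C_mul_X_mul_inv t)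
    rwa [map_mul, map_add, map_one, map_mul, map_C, map_X] at this
  have hw : (1 + C a * (X * v)) * w = C a := by
    have := congrArg (substAlgHom hσ) (one_add_C_mul_X_mul_derivative_logOneAdd a)
    rw [map_mul, map_add, map_one, map_mul, coe_substAlgHom, subst_X hσ, subst_C] at this
    rwa [← map_X (algebraMap ℚ A), ← map_mul]
  refine (isUnit_iff_constantCoeff.mpr (by simp) :
    IsUnit (1 + C (a + algebraMap ℚ A t) * X)).mul_left_cancel ?_
  rw [one_add_C_mul_X_mul_derivative_logOneAdd, map_add C, map_mul, map_pow, map_C]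
  linear_combination -(C a + C (algebraMap ℚ A t) + v * w) * hv - v * hw

end ExpLog

section CharFun

variable {A B : Type*} [CommRing A] [CommRing B] [Algebra ℚ A] [Algebra ℚ B] (f : A →ₗ[ℚ] B)

theorem constantCoeff_mapCoeff_logOneAdd (a : A) :
    constantCoeff (mapCoeff f (logOneAdd a)) = 0 := by
  rw [← coeff_zero_eq_constantCoeff_apply, coeff_mapCoeff, coeff_zero_eq_constantCoeff_apply,
    constantCoeff_logOneAdd, map_zero]

theorem constantCoeff_charFun (a : A) : constantCoeff (charFun f a) = 1 :=
  constantCoeff_expPS (constantCoeff_mapCoeff_logOneAdd f a)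

theorem psi_zero (a : A) : psi f a 0 = 1 := by
  rw [psi, coeff_zero_eq_constantCoeff_apply, constantCoeff_charFun]

theorem derivative_charFun (a : A) :
    d⁄dX B (charFun f a) = mapCoeff f (d⁄dX A (logOneAdd a)) * charFun f a := by
  rw [charFun, derivative_expPS (constantCoeff_mapCoeff_logOneAdd f a), derivative_mapCoeff]

theorem charFun_add_algebraMap {n : ℕ} (hf : f 1 = n • 1) (a : A) (t : ℚ) :
    charFun f (a + algebraMap ℚ A t) = map (algebraMap ℚ B) ((1 + C t * X) ^ n)
      * (charFun f a).subst (map (algebraMap ℚ B) (X * (1 + C t * X)⁻¹)) := by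
  have hσ : constantCoeff (X * (1 + C t * X)⁻¹) = 0 := by simp
  have hσB := HasSubst.of_constantCoeff_zero' (constantCoeff_map_eq_zero (algebraMap ℚ B) hσ)
  have := IsAddTorsionFree.of_module_rat (M := B)
  refine eq_of_derivative_eq_mul (derivative_charFun f _) ?_ ?_
  · rw [derivative_logOneAdd_add_algebraMap, mapCoeff_add, mapCoeff_map, mapCoeff_map_mul,
      mapCoeff_subst_map f hσ, Derivation.leibniz, smul_eq_mul, smul_eq_mul,
      derivative_subst hσB, derivative_charFun, subst_mul hσB, derivative_map, derivative_map,
      derivative_one_add_C_mul_X_pow, derivative_X_mul_inv_one_add_C_mul_X, hf]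
    simp only [map_mul, map_pow, map_natCast, map_nsmul, map_one]
    ring
  · rw [constantCoeff_charFun, map_mul, constantCoeff_subst_of_constantCoeff_eq_zero
      (constantCoeff_map_eq_zero _ hσ), constantCoeff_charFun]
    simp

theorem psi_add_algebraMap {n : ℕ} (hf : f 1 = n • 1) (a : A) (t : ℚ) (m : ℕ) :
    psi f (a + algebraMap ℚ A t) m = ∑ j ∈ range (m + 1),
      t ^ (m - j) • (((Ring.choose ((n : ℤ) - j) (m - j) : ℤ) : ℚ) • psi f a j) := by
  rw [psi, charFun_add_algebraMap f hf, coeff_map_mul_subst_map (by simp)]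
  refine sum_congr rfl fun j hj => ?_
  rw [coeff_one_add_C_mul_X_pow_mul_pow t (Nat.lt_succ_iff.mp (mem_range.mp hj)), mul_smul, psi]

theorem psi_eq_zero_of_lt {n N : ℕ} (hf : f 1 = n • 1) (hN : ∀ k, N < k → ∀ a, psi f a k = 0)
    {k : ℕ} (hk : n < k) (a : A) : psi f a k = 0 := by
  rcases lt_or_ge N k with hNk | hkN
  · exact hN k hNk a
  have hpoly (t : ℚ) : ∑ j ∈ range (N + 1 + 1),
      t ^ (N + 1 - j) • (((Ring.choose ((n : ℤ) - j) (N + 1 - j) : ℤ) : ℚ) • psi f a j) = 0 := by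
    rw [← psi_add_algebraMap f hf]
    exact hN _ (lt_add_one N) _
  have hinj : Set.InjOn (fun j => N + 1 - j) (range (N + 1 + 1) : Set ℕ) := by
    intro i hi j hj hij
    simp only [coe_range, Set.mem_Iio] at hi hj hij
    omega
  have hk' := Module.eq_zero_of_forall_sum_pow_smul_eq_zero hinj hpoly
    (mem_range.mpr (by omega : k < N + 1 + 1))
  exact (smul_eq_zero.mp hk').resolve_left
    (by exact_mod_cast Ring.choose_natCast_sub_ne_zero hk _)

theorem one_add_X_mul_derivative_charFun_one :
    (1 + X) * d⁄dX B (charFun f 1) = C (f 1) * charFun f 1 := by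
  have hX : (1 + X : B⟦X⟧) = map (algebraMap ℚ B) (1 + C 1 * X) := by simp
  rw [derivative_charFun, ← mul_assoc, hX, ← mapCoeff_map_mul,
    show map (algebraMap ℚ A) (1 + C 1 * X) = 1 + C 1 * X by simp,
    one_add_C_mul_X_mul_derivative_logOneAdd, map_one, mapCoeff_one]

theorem psi_one_succ (k : ℕ) : psi f 1 (k + 1) * (k + 1) = (f 1 - k) * psi f 1 k := by
  have h := congrArg (coeff k) (one_add_X_mul_derivative_charFun_one f)
  rw [add_mul, one_mul, map_add, coeff_C_mul, coeff_derivative] at h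
  rcases k with _ | k
  · rw [coeff_zero_X_mul] at h
    simpa [psi] using h
  · rw [coeff_succ_X_mul, coeff_derivative] at h
    simp only [psi]
    push_cast at h ⊢
    linear_combination h

theorem factorial_mul_psi_one (k : ℕ) :
    (k.factorial : B) * psi f 1 k = ∏ j ∈ range k, (f 1 - j) := by
  induction k with
  | zero => simp [psi_zero]
  | succ k ih =>
    rw [prod_range_succ, ← ih, Nat.factorial_succ]
    push_cast
    linear_combination (k.factorial : B) * psi_one_succ f k

theorem psi_one_eq_one {n : ℕ} (hf : f 1 = n • 1) : psi f 1 n = 1 := by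
  have h := factorial_mul_psi_one f n
  have hprod : ∏ j ∈ range n, ((n : B) - j) = n.factorial := by
    rw [← Nat.descFactorial_self, Nat.descFactorial_eq_prod_range, Nat.cast_prod]
    exact prod_congr rfl fun j hj => (Nat.cast_sub (mem_range.mp hj).le).symm
  rw [hf, nsmul_one, hprod] at h
  have := IsAddTorsionFree.of_module_rat (M := B)
  exact IsAddTorsionFree.nsmul_right_injective (Nat.factorial_ne_zero n)
    (by simpa [nsmul_eq_mul] using h)

end CharFun

theorem stmt4_general {A B : Type*} [CommRing A] [CommRing B] [Algebra ℚ A] [Algebra ℚ B]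
    (hconn : ∀ (b : B) (k : ℕ), (∏ j ∈ Finset.range (k + 1), (b - (j : ℕ) • (1 : B))) = 0 →
      ∃ j : ℕ, j ≤ k ∧ b = j • (1 : B))
    (f : A →ₗ[ℚ] B) (N : ℕ)
    (hN : ∀ k : ℕ, N < k → ∀ a : A, psi f a k = 0) :
    ∃ n : ℕ, n ≤ N ∧ f 1 = n • (1 : B) ∧
      (∀ k : ℕ, n < k → ∀ a : A, psi f a k = 0) ∧
      psi f 1 n = 1 := by
  have hprod : ∏ j ∈ range (N + 1), (f 1 - j • (1 : B)) = 0 := by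
    simp_rw [nsmul_one]
    rw [← factorial_mul_psi_one, hN (N + 1) (lt_add_one N), mul_zero]
  obtain ⟨n, hnN, hn⟩ := hconn (f 1) N hprod
  exact ⟨n, hnN, hn, fun k hk => psi_eq_zero_of_lt f hn hN hk, psi_one_eq_one f hn⟩

/-- if `B` is connected and nontrivial and `ψ_k(f,a) = 0` for all `k > N`
and all `a`, then there is `n ≤ N` with `f(1) = n·1_B`, `ψ_k(f,a) = 0` for all `k > n`
and all `a`, and `ψ_n(f,1) = 1`. -/
theorem stmt4 {A B : Type*} [CommRing A] [CommRing B] [Algebra ℚ A] [Algebra ℚ B]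
    [Nontrivial B]
    (hconn : ∀ (b : B) (k : ℕ), (∏ j ∈ Finset.range (k + 1), (b - (j : ℕ) • (1 : B))) = 0 →
      ∃ j : ℕ, j ≤ k ∧ b = j • (1 : B))
    (f : A →ₗ[ℚ] B) (N : ℕ)
    (hN : ∀ k : ℕ, N < k → ∀ a : A, psi f a k = 0) :
    ∃ n : ℕ, n ≤ N ∧ f 1 = n • (1 : B) ∧
      (∀ k : ℕ, n < k → ∀ a : A, psi f a k = 0) ∧
      psi f 1 n = 1 :=
  stmt4_general hconn f N hN
end

section
/- Let f : A → B be an n-homomorphism with n ≥ 1, and let Φ_n : A^n → B be given by the Frobenius recursion Φ_1(a) = f(a), Φ_{k+1}(a_1,…,a_{k+1}) = f(a_{k+1})Φ_k(a_1,…,a_k) − Σ_{i=1}^{k} Φ_k(a_1,…,a_i a_{k+1},…,a_k). Then for every a ∈ A, Φ_n(a, 1, 1, …, 1) = (n−1)!·f(a). (This expresses that the n-homomorphism recovered from the algebra homomorphism F_f associated to f is f itself.) -/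
open PowerSeries

/-!
Appending a `1` to the arguments of `Φ_k` multiplies it by `f 1 - k`:
the leading term contributes `f 1`, and each of the `k` correction terms multiplies an argument
by `1`, so it is `Φ_k` again. As `f 1 = n`, starting from `Φ_1(a) = f a` this gives
`Φ_n(a, 1, …, 1) = (n - 1)(n - 2)⋯1 · f a`.
-/

section Frobenius

variable {A B : Type*} [CommRing A] [CommRing B] [Algebra ℚ A] [Algebra ℚ B] (f : A →ₗ[ℚ] B)

theorem frob_snoc_one (k : ℕ) (v : Fin k → A) :
    frob f (k + 1) (Fin.snoc v 1) = (f 1 - k) * frob f k v := by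
  simp only [frob, Fin.snoc_last, Fin.snoc_castSucc, mul_one, Function.update_eq_self,
    Finset.sum_const, Finset.card_univ, Fintype.card_fin, nsmul_eq_mul, sub_mul]

theorem frob_cons_ones (a : A) (k : ℕ) :
    frob f (k + 1) (Fin.cons a fun _ => 1) = (∏ j ∈ Finset.range k, (f 1 - (j + 1))) * f a := by
  induction k with
  | zero => simp [frob]
  | succ k ih =>
    have hsnoc :
        (Fin.cons a fun _ => 1 : Fin (k + 2) → A) = Fin.snoc (Fin.cons a fun _ => 1) 1 := by
      rw [← Fin.cons_snoc_eq_snoc_cons, ← Fin.snoc_init_self (fun _ : Fin (k + 1) => (1 : A))]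
      rfl
    rw [hsnoc, frob_snoc_one, ih, Finset.prod_range_succ]
    push_cast
    ring

end Frobenius

theorem prod_range_natCast_sub_succ {R : Type*} [CommRing R] (m : ℕ) :
    ∏ j ∈ Finset.range m, ((m + 1 : ℕ) - (j + 1) : R) = m.factorial := by
  rw [← Nat.descFactorial_self, Nat.descFactorial_eq_prod_range, Nat.cast_prod]
  refine Finset.prod_congr rfl fun j hj => ?_
  rw [Nat.cast_sub (Finset.mem_range.mp hj).le]
  push_cast
  ring

/-- for an `n`-homomorphism `f` with `n ≥ 1` and `Φ_n` given by the
Frobenius recursion (implemented by `frob`), one has `Φ_n(a,1,…,1) = (n−1)!·f(a)`. -/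
theorem stmt16 {A B : Type*} [CommRing A] [CommRing B] [Algebra ℚ A] [Algebra ℚ B]
    (f : A →ₗ[ℚ] B) (n : ℕ) (hn : 1 ≤ n) (hf : IsNHom f n) (a : A) :
    frob f n (Function.update (fun _ : Fin n => (1 : A)) ⟨0, hn⟩ a) =
      ((n - 1).factorial : ℚ) • f a := by
  obtain ⟨m, rfl⟩ := Nat.exists_eq_add_of_le' hn
  have hcons :
      Function.update (fun _ : Fin (m + 1) => (1 : A)) ⟨0, hn⟩ a = Fin.cons a fun _ => 1 := by
    rw [← Fin.update_cons_zero (x := (1 : A))]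
    congr 1
    exact (Fin.cons_self_tail _).symm
  rw [hcons, frob_cons_ones, hf.1, nsmul_one, prod_range_natCast_sub_succ, Nat.add_sub_cancel,
    Nat.cast_smul_eq_nsmul, nsmul_eq_mul]
end
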